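/- arXiv:2510.19620 — 5 statements merged into one kernel-verified Lean document; each statement's English description precedes it below -/
import Mathlib

section
/- If the optimal α-value for JR of an instance is positive, then it lies in the finite set {j·k/n : j ∈ {1, …, ⌈n/k⌉ − 1}}; in particular, the optimal α-value for JR is a rational number. -/
/-- A committee `W` satisfies α-JR: every group `S` of size at least `α·n/k`
with a commonly approved candidate contains a voter approving a committee member. -/
def satisfiesAlphaJR {n : ℕ} {C : Type*} [Fintype C] [DecidableEq C]
    (A : Fin n → Finset C) (W : Finset C) (k : ℕ) (α : ℝ) : Prop :=
  ∀ S : Finset (Fin n),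
    α * n / k ≤ (S.card : ℝ) →
    (Finset.univ.filter fun c => ∀ v ∈ S, c ∈ A v).Nonempty →
    ∃ v ∈ S, (A v ∩ W).Nonempty

/-- The infimum α-value of a committee W with respect to JR. -/
noncomputable def alphaJRvalue {n : ℕ} {C : Type*} [Fintype C] [DecidableEq C]
    (A : Fin n → Finset C) (k : ℕ) (W : Finset C) : ℝ :=
  sInf {α : ℝ | satisfiesAlphaJR A W k α}

/-- The optimal (minimum) α-value over all committees of size k. -/
noncomputable def alphaJRstar {n : ℕ} {C : Type*} [Fintype C] [DecidableEq C]
    (A : Fin n → Finset C) (k : ℕ) : ℝ :=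
  sInf {a : ℝ | ∃ W : Finset C, W.card = k ∧ a = alphaJRvalue A k W}

/-!
The α-JR value of a committee `W` is `m(W)·k/n`, where `m(W)` is the largest size of a
cohesive group none of whose members approves a candidate of `W`: α-JR holds exactly when
every such group is smaller than `α·n/k`. Hence the optimum is `m(W₀)·k/n` for an optimal
committee `W₀`, and it is positive iff `m(W₀) ≥ 1`. The greedy algorithm (repeatedly add a
candidate commonly approved by an unrepresented cohesive group of size `⌈n/k⌉`) covers at
least `⌈n/k⌉` new voters per step, so after `k` steps no such group is left; this gives a
committee with `m(W) ≤ ⌈n/k⌉ - 1`, and `m(W₀) ≤ m(W)` by optimality.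
-/

namespace JR

open Finset

variable {n : ℕ} {C : Type*} [Fintype C] [DecidableEq C] (A : Fin n → Finset C)

def IsBlocking (W : Finset C) (S : Finset (Fin n)) : Prop :=
  (univ.filter fun c => ∀ v ∈ S, c ∈ A v).Nonempty ∧ ∀ v ∈ S, Disjoint (A v) W

def coveredVoters (W : Finset C) : Finset (Fin n) :=
  univ.filter fun v => ¬Disjoint (A v) W

open Classical in
noncomputable def maxBlockingCard (W : Finset C) : ℕ :=
  (univ.filter (IsBlocking A W)).sup card

variable {A}

theorem isBlocking_empty [Nonempty C] (W : Finset C) : IsBlocking A W ∅ := by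
  simp [IsBlocking]

theorem IsBlocking.mono {W W' : Finset C} {S : Finset (Fin n)} (h : IsBlocking A W' S)
    (hW : W ⊆ W') : IsBlocking A W S :=
  ⟨h.1, fun v hv => (h.2 v hv).mono_right hW⟩

theorem IsBlocking.disjoint_coveredVoters {W : Finset C} {S : Finset (Fin n)}
    (h : IsBlocking A W S) : Disjoint S (coveredVoters A W) :=
  disjoint_left.2 fun v hv hcov => (mem_filter.1 hcov).2 (h.2 v hv)

theorem satisfiesAlphaJR_iff_forall_isBlocking {W : Finset C} {k : ℕ} {α : ℝ} :
    satisfiesAlphaJR A W k α ↔ ∀ S, IsBlocking A W S → (S.card : ℝ) < α * n / k := by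
  simp only [satisfiesAlphaJR, IsBlocking, ← not_disjoint_iff_nonempty_inter]
  refine forall_congr' fun S => ?_
  constructor
  · rintro h ⟨hcoh, hdisj⟩
    by_contra! hle
    obtain ⟨v, hv, hnd⟩ := h hle hcoh
    exact hnd (hdisj v hv)
  · intro h hle hcoh
    by_contra! hdisj
    exact (h ⟨hcoh, hdisj⟩).not_ge hle

theorem card_le_maxBlockingCard {W : Finset C} {S : Finset (Fin n)} (h : IsBlocking A W S) :
    S.card ≤ maxBlockingCard A W := by
  classical
  exact le_sup (f := card) (mem_filter.2 ⟨mem_univ S, h⟩)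

theorem maxBlockingCard_le {W : Finset C} {m : ℕ}
    (h : ∀ S, IsBlocking A W S → S.card ≤ m) : maxBlockingCard A W ≤ m := by
  classical
  exact Finset.sup_le fun S hS => h S (mem_filter.1 hS).2

theorem exists_isBlocking_card_eq [Nonempty C] (W : Finset C) :
    ∃ S, IsBlocking A W S ∧ S.card = maxBlockingCard A W := by
  classical
  obtain ⟨S, hS, hmax⟩ := exists_mem_eq_sup (univ.filter (IsBlocking A W))
    ⟨∅, mem_filter.2 ⟨mem_univ _, isBlocking_empty W⟩⟩ card
  exact ⟨S, (mem_filter.1 hS).2, hmax.symm⟩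

theorem forall_isBlocking_card_lt_iff [Nonempty C] (W : Finset C) {x : ℝ} :
    (∀ S, IsBlocking A W S → (S.card : ℝ) < x) ↔ (maxBlockingCard A W : ℝ) < x := by
  refine ⟨fun h => ?_, fun h S hS =>
    lt_of_le_of_lt (by exact_mod_cast card_le_maxBlockingCard hS) h⟩
  obtain ⟨S, hS, hcard⟩ := exists_isBlocking_card_eq (A := A) W
  exact hcard ▸ h S hS

theorem alphaJRvalue_eq [Nonempty C] {k : ℕ} (hn : 1 ≤ n) (hk : 1 ≤ k) (W : Finset C) :
    alphaJRvalue A k W = (maxBlockingCard A W : ℝ) * k / n := by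
  have hn0 : (0 : ℝ) < n := by exact_mod_cast hn
  have hk0 : (0 : ℝ) < k := by exact_mod_cast hk
  have hset :
      {α : ℝ | satisfiesAlphaJR A W k α} = Set.Ioi ((maxBlockingCard A W : ℝ) * k / n) := by
    ext α
    rw [Set.mem_ofPred_eq, satisfiesAlphaJR_iff_forall_isBlocking, forall_isBlocking_card_lt_iff,
      Set.mem_Ioi, lt_div_iff₀ hk0, div_lt_iff₀ hn0]
  rw [alphaJRvalue, hset, csInf_Ioi]

theorem exists_card_coveredVoters_insert {W : Finset C} {S : Finset (Fin n)}
    (h : IsBlocking A W S) :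
    ∃ c, (coveredVoters A W).card + S.card ≤ (coveredVoters A (insert c W)).card := by
  obtain ⟨c, hc⟩ := h.1
  refine ⟨c, ?_⟩
  rw [add_comm, ← card_union_of_disjoint h.disjoint_coveredVoters]
  refine card_le_card (union_subset (fun v hv => ?_) (fun v hv => ?_))
  · exact mem_filter.2 ⟨mem_univ v, not_disjoint_iff.2
      ⟨c, (mem_filter.1 hc).2 v hv, mem_insert_self c W⟩⟩
  · exact mem_filter.2 ⟨mem_univ v, fun hd => (mem_filter.1 hv).2
      (hd.mono_right (subset_insert c W))⟩

theorem exists_greedy_committee (q : ℕ) :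
    ∀ j : ℕ, ∃ W : Finset C, W.card ≤ j ∧
      ((∀ S, IsBlocking A W S → S.card < q) ∨ j * q ≤ (coveredVoters A W).card)
  | 0 => ⟨∅, le_rfl, Or.inr (by simp)⟩
  | j + 1 => by
    obtain ⟨W, hWcard, hW⟩ := exists_greedy_committee q j
    by_cases hdone : ∀ S, IsBlocking A W S → S.card < q
    · exact ⟨W, hWcard.trans j.le_succ, Or.inl hdone⟩
    push Not at hdone
    obtain ⟨S, hS, hqS⟩ := hdone
    have hcov := hW.resolve_left fun h => (h S hS).not_ge hqS
    obtain ⟨c, hc⟩ := exists_card_coveredVoters_insert hS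
    refine ⟨insert c W, (card_insert_le c W).trans (by omega), Or.inr ?_⟩
    rw [add_one_mul]
    omega

theorem exists_card_eq_forall_isBlocking_card_lt {k q : ℕ} (hq : 0 < q) (hnq : n ≤ k * q)
    (hkC : k ≤ Fintype.card C) :
    ∃ W : Finset C, W.card = k ∧ ∀ S, IsBlocking A W S → S.card < q := by
  obtain ⟨W, hWcard, hW⟩ := exists_greedy_committee (A := A) q k
  obtain ⟨W', hWW', hW'card⟩ := exists_superset_card_eq hWcard hkC
  refine ⟨W', hW'card, fun S hS => ?_⟩
  rcases hW with hdone | hcov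
  · exact hdone S (hS.mono hWW')
  · have hsum : S.card + (coveredVoters A W).card ≤ n := by
      rw [← card_union_of_disjoint (hS.mono hWW').disjoint_coveredVoters]
      exact (card_le_univ _).trans_eq (Fintype.card_fin n)
    omega

variable (A)

theorem finite_setOf_alphaJRvalue (k : ℕ) :
    {a : ℝ | ∃ W : Finset C, W.card = k ∧ a = alphaJRvalue A k W}.Finite :=
  (Set.finite_range (alphaJRvalue A k)).subset fun _ ⟨W, _, ha⟩ => ⟨W, ha.symm⟩

theorem exists_alphaJRstar_eq {k : ℕ} (hkC : k ≤ Fintype.card C) :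
    ∃ W : Finset C, W.card = k ∧ alphaJRstar A k = alphaJRvalue A k W := by
  obtain ⟨W, -, hW⟩ := exists_subset_card_eq (s := (univ : Finset C)) (by simpa using hkC)
  exact Set.Nonempty.csInf_mem
    (s := {a : ℝ | ∃ W : Finset C, W.card = k ∧ a = alphaJRvalue A k W})
    ⟨_, W, hW, rfl⟩ (finite_setOf_alphaJRvalue A k)

theorem alphaJRstar_le {k : ℕ} {W : Finset C} (hW : W.card = k) :
    alphaJRstar A k ≤ alphaJRvalue A k W :=
  csInf_le (finite_setOf_alphaJRvalue A k).bddBelow ⟨W, hW, rfl⟩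

end JR

open JR in
/-- If the optimal α-value for JR is positive, it lies in
{j·k/n : 1 ≤ j ≤ ⌈n/k⌉ − 1}; in particular it is rational. -/
theorem alphaJRstar_mem_finite_set {n k : ℕ} {C : Type*} [Fintype C] [DecidableEq C]
    (A : Fin n → Finset C) (hn : 1 ≤ n) (hk : 1 ≤ k) (hkC : k ≤ Fintype.card C)
    (hpos : 0 < alphaJRstar A k) :
    (∃ j : ℕ, 1 ≤ j ∧ j ≤ ⌈(n : ℝ) / (k : ℝ)⌉₊ - 1 ∧
      alphaJRstar A k = (j : ℝ) * k / n) ∧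
    ∃ q : ℚ, alphaJRstar A k = (q : ℝ) := by
  have hC : Nonempty C := Fintype.card_pos_iff.mp (hk.trans hkC)
  have hn0 : (0 : ℝ) < n := by exact_mod_cast hn
  have hk0 : (0 : ℝ) < k := by exact_mod_cast hk
  have hnq : n ≤ k * ⌈(n : ℝ) / k⌉₊ := by
    have := (div_le_iff₀' hk0).1 (Nat.le_ceil ((n : ℝ) / k))
    exact_mod_cast this
  obtain ⟨W₀, -, hstar⟩ := exists_alphaJRstar_eq A hkC
  obtain ⟨W₁, hW₁, hW₁small⟩ :=
    exists_card_eq_forall_isBlocking_card_lt (A := A) (Nat.ceil_pos.2 (by positivity)) hnq hkC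
  rw [alphaJRvalue_eq hn hk] at hstar
  have hoptimal : maxBlockingCard A W₀ ≤ maxBlockingCard A W₁ := by
    have := alphaJRstar_le A hW₁
    rw [hstar, alphaJRvalue_eq hn hk, div_le_div_iff_of_pos_right hn0,
      mul_le_mul_iff_left₀ hk0] at this
    exact_mod_cast this
  have hW₁max : maxBlockingCard A W₁ ≤ ⌈(n : ℝ) / k⌉₊ - 1 :=
    maxBlockingCard_le fun S hS => Nat.le_sub_one_of_lt (hW₁small S hS)
  have hpos' : 1 ≤ maxBlockingCard A W₀ :=
    Nat.one_le_iff_ne_zero.2 fun h => by simp [hstar, h] at hpos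
  exact ⟨⟨_, hpos', hoptimal.trans hW₁max, hstar⟩,
    ⟨maxBlockingCard A W₀ * k / n, by rw [hstar]; push_cast; rfl⟩⟩
end

section
/- Consider the election with voters N = {1,…,x+y}, candidates C = {c₁,…,c_{k+1}}, committee size k, where voters 1,…,x each approve {c₁,…,c_k} and voters x+1,…,x+y each approve {c_{k+1}}. Then every committee W of size k has α_EJR(W) ≥ min(x/(x+y), k·y/(x+y)); in particular, with x = k·y, every size-k committee W admits an α-EJR violation for all α ≤ k/(k+1). -/
/-- A committee `W` satisfies α-EJR: for every `ℓ ≥ 1` and every group `S` with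
`|S| ≥ α·ℓ·n/k` and at least `ℓ` commonly approved candidates, some voter in `S`
approves at least `ℓ` committee members. -/
def satisfiesAlphaEJR {n : ℕ} {C : Type*} [Fintype C] [DecidableEq C]
    (A : Fin n → Finset C) (W : Finset C) (k : ℕ) (α : ℝ) : Prop :=
  ∀ ℓ : ℕ, 1 ≤ ℓ → ∀ S : Finset (Fin n),
    α * ℓ * n / k ≤ (S.card : ℝ) →
    ℓ ≤ (Finset.univ.filter fun c => ∀ v ∈ S, c ∈ A v).card →
    ∃ v ∈ S, ℓ ≤ (A v ∩ W).card

/-- The election with voters 1..x approving {c₁,…,c_k} (the candidates of index < k)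
and voters x+1..x+y approving only c_{k+1} (the last candidate). -/
def approvalsXY (k x y : ℕ) (v : Fin (x + y)) : Finset (Fin (k + 1)) :=
  if (v : ℕ) < x then Finset.univ.filter (fun c => (c : ℕ) < k) else {Fin.last k}

lemma card_filter_lt_fin (n m : ℕ) (h : m ≤ n) :
    (Finset.univ.filter fun v : Fin n => (v : ℕ) < m).card = m := by
  rw [show (Finset.univ.filter fun v : Fin n => (v:ℕ) < m)
      = Finset.map (Fin.castLEEmb h) Finset.univ by
    ext v; simp [Fin.exists_iff, Fin.castLEEmb, Fin.ext_iff]]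
  simp

/-- Main violation lemma. -/
lemma violation {k x y : ℕ} (hk : 1 ≤ k) (hx : 1 ≤ x) (hy : 1 ≤ y)
    (W : Finset (Fin (k + 1))) (hW : W.card = k) (α : ℝ)
    (h1 : α ≤ (x : ℝ) / (x + y)) (h2 : α ≤ (k : ℝ) * y / (x + y)) :
    ¬ satisfiesAlphaEJR (approvalsXY k x y) W k α := by
  intro hEJR
  have hn : (0:ℝ) < (x:ℝ) + y := by positivity
  have hkR : (0:ℝ) < (k:ℝ) := by exact_mod_cast hk
  -- W misses some candidate
  have hmiss : ∃ c : Fin (k+1), c ∉ W := by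
    by_contra h
    push_neg at h
    have : W = Finset.univ := Finset.eq_univ_of_forall h
    rw [this] at hW
    simp at hW
  obtain ⟨c, hc⟩ := hmiss
  by_cases hlast : c = Fin.last k
  · -- case: last candidate missed; group of y voters approving only last candidate
    subst hlast
    set S : Finset (Fin (x+y)) := Finset.univ.filter (fun v => ¬ ((v:ℕ) < x)) with hS
    have hScard : S.card = y := by
      have h1' : (Finset.univ.filter fun v : Fin (x+y) => (v:ℕ) < x).card = x :=
        card_filter_lt_fin _ _ (Nat.le_add_right x y)
      rw [hS, Finset.filter_not, Finset.card_sdiff_of_subset (Finset.filter_subset _ _), h1',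
        Finset.card_univ, Fintype.card_fin]
      omega
    have hsize : α * 1 * (x+y) / k ≤ (S.card : ℝ) := by
      rw [hScard]
      rw [div_le_iff₀ hkR]
      have : α * ((x:ℝ)+y) ≤ (k:ℝ) * y := by
        calc α * ((x:ℝ)+y) ≤ ((k:ℝ) * y / (x+y)) * ((x:ℝ)+y) := by
              exact mul_le_mul_of_nonneg_right h2 hn.le
          _ = (k:ℝ) * y := by field_simp
      linarith
    have hcommon : 1 ≤ (Finset.univ.filter fun c => ∀ v ∈ S, c ∈ approvalsXY k x y v).card := by
      rw [Finset.one_le_card]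
      refine ⟨Fin.last k, ?_⟩
      simp only [Finset.mem_filter, Finset.mem_univ, true_and]
      intro v hv
      rw [hS] at hv
      simp only [Finset.mem_filter, Finset.mem_univ, true_and] at hv
      simp [approvalsXY, hv]
    obtain ⟨v, hvS, hvW⟩ := hEJR 1 le_rfl S (by push_cast; exact_mod_cast hsize) hcommon
    rw [hS] at hvS
    simp only [Finset.mem_filter, Finset.mem_univ, true_and] at hvS
    have : approvalsXY k x y v ∩ W = ∅ := by
      simp [approvalsXY, hvS, Finset.singleton_inter_of_notMem hc]
    rw [this] at hvW
    simp at hvW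
  · -- case: some candidate with index < k missed
    have hck : (c : ℕ) < k := by
      have := c.isLt
      rcases Nat.lt_or_ge (c : ℕ) k with h | h
      · exact h
      · exact absurd (Fin.ext (show (c:ℕ) = ((Fin.last k : Fin (k+1)) : ℕ) by
          rw [Fin.val_last]; omega)) hlast
    set S : Finset (Fin (x+y)) := Finset.univ.filter (fun v => (v:ℕ) < x) with hS
    have hScard : S.card = x := card_filter_lt_fin _ _ (Nat.le_add_right x y)
    have hsize : α * k * (x+y) / k ≤ (S.card : ℝ) := by
      rw [hScard]
      have : α * (k:ℝ) * ((x:ℝ)+y) / k = α * ((x:ℝ)+y) := by field_simp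
      rw [this]
      calc α * ((x:ℝ)+y) ≤ ((x:ℝ) / (x+y)) * ((x:ℝ)+y) := mul_le_mul_of_nonneg_right h1 hn.le
        _ = (x:ℝ) := by field_simp
    have hsub : (Finset.univ.filter fun c : Fin (k+1) => (c:ℕ) < k)
        ⊆ (Finset.univ.filter fun c => ∀ v ∈ S, c ∈ approvalsXY k x y v) := by
      intro c' hc'
      simp only [Finset.mem_filter, Finset.mem_univ, true_and] at hc' ⊢
      intro v hv
      rw [hS] at hv
      simp only [Finset.mem_filter, Finset.mem_univ, true_and] at hv
      simp [approvalsXY, hv, hc']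
    have hcommon : k ≤ (Finset.univ.filter fun c => ∀ v ∈ S, c ∈ approvalsXY k x y v).card := by
      calc k = (Finset.univ.filter fun c : Fin (k+1) => (c:ℕ) < k).card :=
            (card_filter_lt_fin _ _ (Nat.le_succ k)).symm
        _ ≤ _ := Finset.card_le_card hsub
    obtain ⟨v, hvS, hvW⟩ := hEJR k hk S (by push_cast; exact_mod_cast hsize) hcommon
    rw [hS] at hvS
    simp only [Finset.mem_filter, Finset.mem_univ, true_and] at hvS
    have hAv : approvalsXY k x y v = Finset.univ.filter (fun c : Fin (k+1) => (c:ℕ) < k) := by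
      simp [approvalsXY, hvS]
    have hssub : approvalsXY k x y v ∩ W ⊂ approvalsXY k x y v := by
      refine Finset.ssubset_iff_of_subset (Finset.inter_subset_left) |>.mpr ?_
      exact ⟨c, by simp [hAv, hck], by simp [hc]⟩
    have hlt := Finset.card_lt_card hssub
    rw [hAv] at hvW
    rw [hAv, card_filter_lt_fin _ _ (Nat.le_succ k)] at hlt
    omega

/-- Every size-k committee W has α_EJR(W) ≥ min(x/(x+y), k·y/(x+y)); in particular,
with x = k·y, every size-k committee admits an α-EJR violation for all
0 ≤ α ≤ k/(k+1). -/
theorem alphaEJR_gap_example {k x y : ℕ} (hk : 1 ≤ k) (hx : 1 ≤ x) (hy : 1 ≤ y)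
    (W : Finset (Fin (k + 1))) (hW : W.card = k) :
    min ((x : ℝ) / (x + y)) ((k : ℝ) * y / (x + y)) ≤
      sInf {α : ℝ | satisfiesAlphaEJR (approvalsXY k x y) W k α} ∧
    (x = k * y → ∀ α : ℝ, 0 ≤ α → α ≤ (k : ℝ) / (k + 1) →
      ¬ satisfiesAlphaEJR (approvalsXY k x y) W k α) := by
  have hn : (0:ℝ) < (x:ℝ) + y := by positivity
  have hkR : (0:ℝ) < (k:ℝ) := by exact_mod_cast hk
  constructor
  · apply le_csInf
    · -- nonempty: α = k + 1 satisfies vacuously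
      refine ⟨(k:ℝ) + 1, ?_⟩
      intro ℓ hℓ S hsize _
      exfalso
      have hcard : (S.card : ℝ) ≤ (x:ℝ) + y := by
        have := Finset.card_le_card (Finset.subset_univ S)
        rw [Finset.card_univ, Fintype.card_fin] at this
        push_cast
        exact_mod_cast this
      have hℓR : (1:ℝ) ≤ (ℓ:ℝ) := by exact_mod_cast hℓ
      have : ((k:ℝ) + 1) * ℓ * (x+y) / k > (x:ℝ) + y := by
        rw [gt_iff_lt, lt_div_iff₀ hkR]
        have hnn : (0:ℝ) ≤ (((k:ℝ)+1) * ((x:ℝ)+y)) * ((ℓ:ℝ)-1) :=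
          mul_nonneg (mul_nonneg (by linarith) hn.le) (by linarith)
        nlinarith
      push_cast at hsize
      linarith
    · intro b hb
      by_contra hlt
      push_neg at hlt
      rw [lt_min_iff] at hlt
      exact violation hk hx hy W hW b (by push_cast; linarith [hlt.1]) (by push_cast; linarith [hlt.2]) hb
  · intro hxy α _ hα
    have hy' : (0:ℝ) < (y:ℝ) := by exact_mod_cast hy
    have hxval : (x:ℝ) = (k:ℝ) * y := by exact_mod_cast hxy
    have heq : ((k:ℝ)) / (k + 1) = (x:ℝ) / (x + y) := by
      rw [hxval]
      rw [div_eq_div_iff (by positivity) (by nlinarith)]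
      ring
    have heq2 : ((k:ℝ)) / (k + 1) = (k:ℝ) * y / (x + y) := by
      rw [hxval]
      rw [div_eq_div_iff (by positivity) (by nlinarith)]
      ring
    exact violation hk hx hy W hW α (by rw [← heq]; exact hα) (by rw [← heq2]; exact hα)
end

section
/- Consider the election with n = (k+1)² voters, candidates B = {b₁,…,b_{k+1}} where b_i is approved exactly by voters {(i−1)(k+1)+1, …, i(k+1)}, and candidates D = {d₁,…,d_k} where d_i is approved exactly by voters v with v ≡ i (mod k+1), and committee size k. Then (a) the committee W = {b₁,…,b_k} violates α-JR for every α ≤ k/(k+1); and (b) the committee D satisfies α-JR for every α > k/n. -/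
/-- The election with n = (k+1)² voters: candidate b_i (inl i) is approved exactly by
the i-th block of k+1 consecutive voters, and candidate d_i (inr i) is approved
exactly by the voters congruent to i modulo k+1. -/
def approvalsBD (k : ℕ) (v : Fin ((k + 1) * (k + 1))) : Finset (Fin (k + 1) ⊕ Fin k) :=
  {Sum.inl ⟨(v : ℕ) / (k + 1), Nat.div_lt_of_lt_mul v.isLt⟩} ∪
    (if h : (v : ℕ) % (k + 1) < k then {Sum.inr ⟨(v : ℕ) % (k + 1), h⟩} else ∅)

/-! The committee `{b₁, …, b_k}` leaves the whole last block unrepresented, and that block of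
`k + 1` voters is cohesive (it approves `b_{k+1}`) and exactly reaches the quota `α n / k`
once `α ≤ k / (k + 1)`. The committee `D` represents every voter except those congruent to
`k` modulo `k + 1`; such a voter approves only its own block candidate, so no two of them
share a candidate, and a quota above `1` forces every cohesive group to have two members. -/

open Finset

theorem satisfiesAlphaJR_of_pairwise_disjoint {n : ℕ} {C : Type*} [Fintype C] [DecidableEq C]
    {A : Fin n → Finset C} {W : Finset C} {k : ℕ} {α : ℝ} (hquota : 1 < α * n / k)
    (hW : ∀ v w, v ≠ w → Disjoint (A v) W → Disjoint (A w) W → Disjoint (A v) (A w)) :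
    satisfiesAlphaJR A W k α := by
  intro S hS ⟨c, hc⟩
  have hc : ∀ v ∈ S, c ∈ A v := by simpa using hc
  obtain ⟨v, hv, w, hw, hvw⟩ := one_lt_card.mp (by exact_mod_cast hquota.trans_le hS)
  by_contra! hunrep
  have hdisj : ∀ u ∈ S, Disjoint (A u) W := fun u hu =>
    disjoint_iff_inter_eq_empty.mpr (hunrep u hu)
  exact disjoint_left.mp (hW v w hvw (hdisj v hv) (hdisj w hw)) (hc v hv) (hc w hw)

section approvalsBD

variable {k : ℕ}

theorem inl_mem_approvalsBD {v : Fin ((k + 1) * (k + 1))} {i : Fin (k + 1)} :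
    Sum.inl i ∈ approvalsBD k v ↔ (v : ℕ) / (k + 1) = i := by
  unfold approvalsBD
  split_ifs <;> simp [Fin.ext_iff, eq_comm]

theorem inr_mem_approvalsBD {v : Fin ((k + 1) * (k + 1))} {i : Fin k} :
    Sum.inr i ∈ approvalsBD k v ↔ (v : ℕ) % (k + 1) = i := by
  unfold approvalsBD
  split_ifs with h
  · simp [Fin.ext_iff, eq_comm]
  · have := i.isLt
    simp only [mem_union, mem_singleton, reduceCtorEq, notMem_empty, or_self, false_iff]
    omega

theorem approvalsBD_of_not_lt {v : Fin ((k + 1) * (k + 1))} (h : ¬ (v : ℕ) % (k + 1) < k) :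
    approvalsBD k v = {Sum.inl ⟨(v : ℕ) / (k + 1), Nat.div_lt_of_lt_mul v.isLt⟩} := by
  simp [approvalsBD, h]

def blockVoters (k : ℕ) (i : Fin (k + 1)) : Fin (k + 1) ↪ Fin ((k + 1) * (k + 1)) where
  toFun j := ⟨i * (k + 1) + j, by nlinarith [i.isLt, j.isLt]⟩
  inj' _ _ h := by simpa [Fin.ext_iff] using h

theorem blockVoters_apply_val (i j : Fin (k + 1)) : (blockVoters k i j : ℕ) = i * (k + 1) + j :=
  rfl

theorem blockVoters_div (i j : Fin (k + 1)) : (blockVoters k i j : ℕ) / (k + 1) = i := by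
  rw [blockVoters_apply_val]
  refine Nat.div_eq_of_lt_le (Nat.le_add_right _ _) ?_
  rw [add_one_mul]
  exact Nat.add_lt_add_left j.isLt _

theorem disjoint_approvalsBD_inl_castSucc {v : Fin ((k + 1) * (k + 1))}
    (hv : (v : ℕ) / (k + 1) = k) :
    Disjoint (approvalsBD k v)
      (univ.image fun i : Fin k => (Sum.inl i.castSucc : Fin (k + 1) ⊕ Fin k)) := by
  refine disjoint_right.mpr fun c hc hcv => ?_
  obtain ⟨i, -, rfl⟩ := mem_image.mp hc
  have := inl_mem_approvalsBD.mp hcv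
  simp only [Fin.val_castSucc] at this
  omega

theorem mod_eq_of_disjoint_approvalsBD_inr {v : Fin ((k + 1) * (k + 1))}
    (hv : Disjoint (approvalsBD k v) (univ.image Sum.inr)) : (v : ℕ) % (k + 1) = k := by
  by_contra hne
  have hlt : (v : ℕ) % (k + 1) < k := by
    have : (v : ℕ) % (k + 1) < k + 1 := Nat.mod_lt _ k.succ_pos
    omega
  exact disjoint_left.mp hv (inr_mem_approvalsBD (i := ⟨_, hlt⟩).mpr rfl)
    (mem_image_of_mem _ (mem_univ _))

theorem disjoint_approvalsBD_of_disjoint_inr {v w : Fin ((k + 1) * (k + 1))} (hvw : v ≠ w)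
    (hv : Disjoint (approvalsBD k v) (univ.image Sum.inr))
    (hw : Disjoint (approvalsBD k w) (univ.image Sum.inr)) :
    Disjoint (approvalsBD k v) (approvalsBD k w) := by
  have hv' := mod_eq_of_disjoint_approvalsBD_inr hv
  have hw' := mod_eq_of_disjoint_approvalsBD_inr hw
  rw [approvalsBD_of_not_lt (by omega), approvalsBD_of_not_lt (by omega), disjoint_singleton]
  intro hdiv
  simp only [Sum.inl.injEq, Fin.mk.injEq] at hdiv
  exact hvw (Fin.ext (by
    rw [← Nat.div_add_mod v (k + 1), ← Nat.div_add_mod w (k + 1), hdiv, hv', hw']))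

theorem approvalsBD_not_satisfiesAlphaJR_inl {α : ℝ} (hα : α ≤ (k : ℝ) / (k + 1)) :
    ¬ satisfiesAlphaJR (approvalsBD k)
      (univ.image fun i : Fin k => (Sum.inl i.castSucc : Fin (k + 1) ⊕ Fin k)) k α := by
  intro hJR
  set S := univ.map (blockVoters k (Fin.last k))
  have hquota : α * ((k + 1) * (k + 1) : ℕ) / k ≤ #S := by
    have hαk : α * (k + 1) ≤ k := (le_div_iff₀ (by positivity)).mp hα
    simp only [S, card_map, card_univ, Fintype.card_fin]
    push_cast
    exact div_le_of_le_mul₀ (by positivity) (by positivity) (by nlinarith)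
  have hcohesive : (univ.filter fun c => ∀ v ∈ S, c ∈ approvalsBD k v).Nonempty :=
    ⟨Sum.inl (Fin.last k), by simp [S, inl_mem_approvalsBD, blockVoters_div]⟩
  obtain ⟨v, hv, hrep⟩ := hJR S hquota hcohesive
  obtain ⟨j, -, rfl⟩ := mem_map.mp hv
  exact not_disjoint_iff_nonempty_inter.mpr hrep
    (disjoint_approvalsBD_inl_castSucc (blockVoters_div _ j))

theorem approvalsBD_satisfiesAlphaJR_inr (hk : 1 ≤ k) {α : ℝ}
    (hα : (k : ℝ) / ((k + 1) * (k + 1)) < α) :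
    satisfiesAlphaJR (approvalsBD k)
      (univ.image fun i : Fin k => (Sum.inr i : Fin (k + 1) ⊕ Fin k)) k α := by
  refine satisfiesAlphaJR_of_pairwise_disjoint ?_ fun _ _ => disjoint_approvalsBD_of_disjoint_inr
  rw [div_lt_iff₀ (by positivity)] at hα
  rw [lt_div_iff₀ (by exact_mod_cast hk)]
  push_cast
  linarith

end approvalsBD

/-- (a) The committee {b₁,…,b_k} violates α-JR for every 0 ≤ α ≤ k/(k+1);
(b) the committee D = {d₁,…,d_k} satisfies α-JR for every α > k/n, n = (k+1)². -/
theorem approvalsBD_JR {k : ℕ} (hk : 1 ≤ k) :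
    (∀ α : ℝ, 0 ≤ α → α ≤ (k : ℝ) / (k + 1) →
      ¬ satisfiesAlphaJR (approvalsBD k)
        ((Finset.univ : Finset (Fin k)).image fun i => (Sum.inl i.castSucc : Fin (k + 1) ⊕ Fin k))
        k α) ∧
    (∀ α : ℝ, (k : ℝ) / ((k + 1) * (k + 1)) < α →
      satisfiesAlphaJR (approvalsBD k)
        ((Finset.univ : Finset (Fin k)).image fun i => (Sum.inr i : Fin (k + 1) ⊕ Fin k))
        k α) :=
  ⟨fun _ _ hα => approvalsBD_not_satisfiesAlphaJR_inl hα,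
    fun _ hα => approvalsBD_satisfiesAlphaJR_inr hk hα⟩
end

section
/- In a party-list instance, the greedy sequential algorithm that in each of k rounds adds a candidate of the party p maximizing s_p/(w_p + 1) (where w_p is the current number of seats of p) returns a committee minimizing α_EJR among all size-k committees. -/
open Finset

namespace Apportionment

variable {ι C : Type*} [DecidableEq C]

def IsPartyList (A : ι → Finset C) : Prop :=
  ∀ v v' : ι, A v = A v' ∨ A v ∩ A v' = ∅

def seats (A : ι → Finset C) (W : Finset C) (u : ι) : ℕ := (A u ∩ W).card

section

variable {A : ι → Finset C}

theorem IsPartyList.eq_of_mem_of_mem (hA : IsPartyList A) {c : C} {u v : ι} (hu : c ∈ A u)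
    (hv : c ∈ A v) : A u = A v :=
  (hA u v).resolve_right fun h => by simpa [h] using mem_inter.2 ⟨hu, hv⟩

theorem seats_mono {W W' : Finset C} (h : W ⊆ W') (u : ι) : seats A W u ≤ seats A W' u :=
  card_le_card (inter_subset_inter_left h)

theorem seats_insert_of_mem {W : Finset C} {c : C} {u : ι} (hc : c ∉ W) (hu : c ∈ A u) :
    seats A (insert c W) u = seats A W u + 1 := by
  rw [seats, inter_insert_of_mem hu, card_insert_of_notMem fun h => hc (mem_inter.1 h).2, seats]

theorem seats_insert_of_notMem {W : Finset C} {c : C} {u : ι} (hu : c ∉ A u) :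
    seats A (insert c W) u = seats A W u := by
  rw [seats, inter_insert_of_notMem hu, seats]

end

variable [Fintype ι]

def partySize (A : ι → Finset C) (u : ι) : ℕ := (univ.filter fun w => A w = A u).card

noncomputable def quotient (A : ι → Finset C) (W : Finset C) (u : ι) : ℝ :=
  partySize A u / ((seats A W u : ℝ) + 1)

/-- `s_v / w_v` is the quotient with which `v` won its last seat. -/
def IsDHondtBalanced (A : ι → Finset C) (W : Finset C) : Prop :=
  ∀ u v, 0 < seats A W v → quotient A W u ≤ partySize A v / (seats A W v : ℝ)

def IsGreedyStep (A : ι → Finset C) (W W' : Finset C) : Prop :=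
  ∃ (c : C) (v : ι), c ∈ A v ∧ c ∉ W ∧ (∀ u, quotient A W u ≤ quotient A W v) ∧
    W' = insert c W

variable {A : ι → Finset C}

theorem IsPartyList.sum_card_inter (hA : IsPartyList A) (W : Finset C) :
    ∑ B ∈ univ.image A, (B ∩ W).card = (univ.biUnion A ∩ W).card := by
  rw [← card_biUnion]
  · congr 1
    ext c
    simp
  · rintro _ hB _ hB' hne
    obtain ⟨u, -, rfl⟩ := mem_image.1 hB
    obtain ⟨v, -, rfl⟩ := mem_image.1 hB'
    exact (disjoint_iff_inter_eq_empty.2 ((hA u v).resolve_left hne)).mono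
      inter_subset_left inter_subset_left

theorem IsPartyList.seats_le_of_forall_seats_le (hA : IsPartyList A) {X Y : Finset C}
    (hX : X ⊆ univ.biUnion A) (hcard : Y.card ≤ X.card) (h : ∀ u, seats A X u ≤ seats A Y u)
    (u : ι) : seats A Y u ≤ seats A X u := by
  have hle : ∀ B ∈ univ.image A, (B ∩ X).card ≤ (B ∩ Y).card :=
    forall_mem_image.2 fun u _ => h u
  have hsum : ∑ B ∈ univ.image A, (B ∩ Y).card ≤ ∑ B ∈ univ.image A, (B ∩ X).card := by
    rw [hA.sum_card_inter, hA.sum_card_inter, inter_eq_right.2 hX]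
    exact (card_le_card inter_subset_right).trans hcard
  exact ((sum_eq_sum_iff_of_le hle).1 ((sum_le_sum hle).antisymm hsum) (A u)
    (mem_image_of_mem A (mem_univ u))).ge

theorem quotient_le_quotient {W W' : Finset C} {u : ι} (h : seats A W u ≤ seats A W' u) :
    quotient A W' u ≤ quotient A W u :=
  div_le_div_of_nonneg_left (Nat.cast_nonneg _) (by positivity) (by gcongr)

theorem isDHondtBalanced_empty : IsDHondtBalanced A ∅ := by
  intro u v hv
  simp [seats] at hv

theorem IsGreedyStep.card_eq {W W' : Finset C} (h : IsGreedyStep A W W') :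
    W'.card = W.card + 1 := by
  obtain ⟨c, -, -, hc, -, rfl⟩ := h
  exact card_insert_of_notMem hc

theorem IsGreedyStep.subset_biUnion {W W' : Finset C} (h : IsGreedyStep A W W')
    (hW : W ⊆ univ.biUnion A) : W' ⊆ univ.biUnion A := by
  obtain ⟨c, v, hcv, -, -, rfl⟩ := h
  exact insert_subset (mem_biUnion.2 ⟨v, mem_univ v, hcv⟩) hW

theorem IsGreedyStep.isDHondtBalanced (hA : IsPartyList A) {W W' : Finset C}
    (h : IsGreedyStep A W W') (hW : IsDHondtBalanced A W) : IsDHondtBalanced A W' := by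
  obtain ⟨c, v₀, hcv₀, hcW, hmax, rfl⟩ := h
  intro u v hv
  have hu : quotient A (insert c W) u ≤ quotient A W u :=
    quotient_le_quotient (seats_mono (subset_insert c W) u)
  by_cases hcv : c ∈ A v
  · have hvv₀ : A v = A v₀ := hA.eq_of_mem_of_mem hcv hcv₀
    calc quotient A (insert c W) u ≤ quotient A W v₀ := hu.trans (hmax u)
      _ = partySize A v / (seats A (insert c W) v : ℝ) := by
        rw [seats_insert_of_mem hcW hcv]
        simp only [quotient, partySize, seats, hvv₀, Nat.cast_add, Nat.cast_one]
  · rw [seats_insert_of_notMem hcv] at hv ⊢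
    exact hu.trans (hW u v hv)

theorem greedy_run_invariants (hA : IsPartyList A) {Wseq : ℕ → Finset C} (h0 : Wseq 0 = ∅)
    {k : ℕ} (hstep : ∀ i < k, IsGreedyStep A (Wseq i) (Wseq (i + 1))) :
    (Wseq k).card = k ∧ Wseq k ⊆ univ.biUnion A ∧ IsDHondtBalanced A (Wseq k) := by
  induction k with
  | zero => simp [h0, isDHondtBalanced_empty]
  | succ k ih =>
    obtain ⟨hcard, hcover, hbal⟩ := ih fun i hi => hstep i (by omega)
    have hk := hstep k (lt_add_one k)
    exact ⟨by rw [hk.card_eq, hcard], hk.subset_biUnion hcover, hk.isDHondtBalanced hA hbal⟩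

theorem IsDHondtBalanced.exists_le_quotient (hA : IsPartyList A) {G W : Finset C}
    (hG : IsDHondtBalanced A G) (hcover : G ⊆ univ.biUnion A)
    (hsize : ∀ u, G.card ≤ (A u).card) (hW : W.card ≤ G.card) {p : ι}
    (hp : seats A G p < (A p).card) :
    ∃ q, seats A W q < (A q).card ∧ quotient A G p ≤ quotient A W q := by
  by_cases h : ∃ q, seats A W q < seats A G q
  · obtain ⟨q, hq⟩ := h
    refine ⟨q, hq.trans_le ((card_le_card inter_subset_right).trans (hsize q)), ?_⟩
    calc quotient A G p ≤ partySize A q / (seats A G q : ℝ) := hG p q (by omega)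
      _ ≤ quotient A W q :=
        div_le_div_of_nonneg_left (Nat.cast_nonneg _) (by positivity) (by exact_mod_cast hq)
  · simp only [not_exists, not_lt] at h
    have hpW := hA.seats_le_of_forall_seats_le hcover hW h p
    exact ⟨p, hpW.trans_lt hp, quotient_le_quotient hpW⟩

end Apportionment

open Apportionment

section

variable {n k : ℕ} {C : Type*} [Fintype C] [DecidableEq C] {A : Fin n → Finset C}
  {W : Finset C} {α : ℝ}

theorem satisfiesAlphaEJR.pos [Nonempty C] (h : satisfiesAlphaEJR A W k α) : 0 < α := by
  by_contra! hα
  have hdemand : α * (1 : ℕ) * n / k ≤ (∅ : Finset (Fin n)).card := by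
    simpa using div_nonpos_of_nonpos_of_nonneg (mul_nonpos_of_nonpos_of_nonneg hα n.cast_nonneg)
      k.cast_nonneg
  have hcohesive : 1 ≤ (univ.filter fun c => ∀ v ∈ (∅ : Finset (Fin n)), c ∈ A v).card := by
    simpa using Nat.one_le_iff_ne_zero.2 Fintype.card_ne_zero
  obtain ⟨v, hv, -⟩ := h 1 le_rfl ∅ hdemand hcohesive
  simp at hv

theorem satisfiesAlphaEJR_natCast_add_one (hn : 0 < n) (hk : 0 < k) :
    satisfiesAlphaEJR A W k (k + 1) := by
  intro ℓ hℓ S hS _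
  exfalso
  have hSn : (S.card : ℝ) ≤ n := by
    exact_mod_cast (card_le_univ S).trans_eq (Fintype.card_fin n)
  have hk' : (0 : ℝ) < k := by exact_mod_cast hk
  have hn' : (0 : ℝ) < n := by exact_mod_cast hn
  have hℓ' : (1 : ℝ) ≤ ℓ := by exact_mod_cast hℓ
  rw [div_le_iff₀ hk'] at hS
  nlinarith [mul_le_mul_of_nonneg_right hℓ' (by positivity : (0 : ℝ) ≤ (k + 1) * n)]

theorem satisfiesAlphaEJR.quotient_lt (h : satisfiesAlphaEJR A W k α) {q : Fin n}
    (hq : seats A W q < (A q).card) : quotient A W q < α * n / k := by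
  by_contra! hle
  rw [quotient, le_div_iff₀ (by positivity)] at hle
  set S := univ.filter fun w => A w = A q
  have hdemand : α * ↑(seats A W q + 1) * n / k ≤ S.card := by
    push_cast
    rw [show α * ((seats A W q : ℝ) + 1) * n / k = α * n / k * (seats A W q + 1) by ring]
    exact hle
  have hcohesive : seats A W q + 1 ≤ (univ.filter fun c => ∀ v ∈ S, c ∈ A v).card :=
    hq.trans_le <| card_le_card fun c hc =>
      mem_filter.2 ⟨mem_univ c, fun v hv => by rwa [(mem_filter.1 hv).2]⟩
  obtain ⟨v, hvS, hv⟩ := h (seats A W q + 1) (by omega) S hdemand hcohesive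
  rw [(mem_filter.1 hvS).2] at hv
  exact (lt_add_one (seats A W q)).not_ge hv

theorem satisfiesAlphaEJR_of_forall_quotient_lt (hA : IsPartyList A) (hn : 0 < n) (hk : 0 < k)
    (hα : 0 < α) (h : ∀ p, seats A W p < (A p).card → quotient A W p < α * n / k) :
    satisfiesAlphaEJR A W k α := by
  intro ℓ hℓ S hS hcoh
  obtain ⟨d, hd⟩ := card_pos.1 (hℓ.trans hcoh)
  obtain ⟨p, hp⟩ : S.Nonempty := by
    rw [← card_pos, ← Nat.cast_pos (α := ℝ)]
    exact lt_of_lt_of_le (by positivity) hS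
  by_contra! hfew
  have hgp : seats A W p + 1 ≤ ℓ := hfew p hp
  have hℓp : ℓ ≤ (A p).card := hcoh.trans (card_le_card fun c hc => (mem_filter.1 hc).2 p hp)
  have hSp : S.card ≤ partySize A p := card_le_card fun v hv => mem_filter.2
    ⟨mem_univ v, hA.eq_of_mem_of_mem ((mem_filter.1 hd).2 v hv) ((mem_filter.1 hd).2 p hp)⟩
  refine (h p (by omega)).not_ge ?_
  rw [quotient, le_div_iff₀ (by positivity)]
  calc α * n / k * (seats A W p + 1) ≤ α * n / k * ℓ := by gcongr; exact_mod_cast hgp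
    _ = α * ℓ * n / k := by ring
    _ ≤ S.card := hS
    _ ≤ partySize A p := by exact_mod_cast hSp

end

/-- In a party-list instance, any run of the greedy sequential algorithm (in each of
k rounds add an unchosen candidate of a party maximizing s_p/(w_p+1), where w_p is
the party's current number of seats) returns a size-k committee minimizing the
infimum α-value for EJR among all size-k committees. -/
theorem greedy_minimizes_alphaEJR {n k : ℕ} {C : Type*} [Fintype C] [DecidableEq C]
    (A : Fin n → Finset C) (hn : 1 ≤ n) (hk : 1 ≤ k)
    (hpl : ∀ v v' : Fin n, A v = A v' ∨ A v ∩ A v' = ∅)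
    (hsize : ∀ v : Fin n, k ≤ (A v).card)
    (Wseq : ℕ → Finset C) (h0 : Wseq 0 = ∅)
    (hstep : ∀ i < k, ∃ (c : C) (v : Fin n),
      c ∈ A v ∧ c ∉ Wseq i ∧
      (∀ u : Fin n,
        ((Finset.univ.filter fun w => A w = A u).card : ℝ) / (((A u ∩ Wseq i).card : ℝ) + 1) ≤
          ((Finset.univ.filter fun w => A w = A v).card : ℝ) / (((A v ∩ Wseq i).card : ℝ) + 1)) ∧
      Wseq (i + 1) = insert c (Wseq i)) :
    (Wseq k).card = k ∧
      ∀ W' : Finset C, W'.card = k →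
        sInf {α : ℝ | satisfiesAlphaEJR A (Wseq k) k α} ≤
          sInf {α : ℝ | satisfiesAlphaEJR A W' k α} := by
  obtain ⟨hcard, hcover, hbal⟩ := greedy_run_invariants hpl h0 hstep
  obtain ⟨c, -⟩ := card_pos.1 (hk.trans (hsize ⟨0, hn⟩))
  have : Nonempty C := ⟨c⟩
  refine ⟨hcard, fun W' hW' => csInf_le_csInf ⟨0, fun α hα => hα.pos.le⟩
    ⟨_, satisfiesAlphaEJR_natCast_add_one hn hk⟩ fun α hα => ?_⟩
  refine satisfiesAlphaEJR_of_forall_quotient_lt hpl hn hk hα.pos fun p hp => ?_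
  obtain ⟨q, hq, hpq⟩ := hbal.exists_le_quotient hpl hcover (fun u => hcard.trans_le (hsize u))
    (hW'.trans hcard.symm).le hp
  exact hpq.trans_lt (hα.quotient_lt hq)
end

section
/- For any seat-allocation problem with party sizes s₁,…,s_m > 0 and k seats, the greedy algorithm that repeatedly assigns the next seat to a party maximizing s_p/(w_p+1) produces an allocation (w_p) with Σw_p = k minimizing max_p s_p/(w_p+1) over all nonnegative integer allocations summing to k. -/
/-- For party sizes s₁,…,s_m > 0 and k seats, any run of the greedy algorithm that
repeatedly gives the next seat to a party maximizing s_p/(w_p+1) yields an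
allocation with Σ w_p = k minimizing max_p s_p/(w_p+1) over all nonnegative
integer allocations summing to k. -/
theorem greedy_minimizes_max_quotient {m k : ℕ}
    (hne : (Finset.univ : Finset (Fin m)).Nonempty)
    (s : Fin m → ℕ) (hs : ∀ p, 0 < s p)
    (w : ℕ → Fin m → ℕ) (h0 : w 0 = fun _ => 0)
    (hstep : ∀ i < k, ∃ p : Fin m,
      (∀ q : Fin m, (s q : ℝ) / ((w i q : ℝ) + 1) ≤ (s p : ℝ) / ((w i p : ℝ) + 1)) ∧
      w (i + 1) = Function.update (w i) p (w i p + 1)) :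
    (∑ p, w k p) = k ∧
      ∀ u : Fin m → ℕ, (∑ p, u p) = k →
        Finset.univ.sup' hne (fun p => (s p : ℝ) / ((w k p : ℝ) + 1)) ≤
          Finset.univ.sup' hne (fun p => (s p : ℝ) / ((u p : ℝ) + 1)) := by
  -- The max quotient function at time i
  set F : ℕ → Fin m → ℝ := fun i p => (s p : ℝ) / ((w i p : ℝ) + 1) with hF
  -- sums
  have hsum : ∀ i, i ≤ k → (∑ p, w i p) = i := by
    intro i
    induction i with
    | zero => intro _; simp [h0]
    | succ n ih =>
      intro hi
      have hn : n < k := Nat.lt_of_succ_le hi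
      obtain ⟨p, -, hupd⟩ := hstep n hn
      have h1 : (∑ q, w (n + 1) q) = (w n p + 1) + ∑ q ∈ Finset.univ \ {p}, w n q := by
        rw [hupd, Finset.sum_update_of_mem (Finset.mem_univ p)]
      have h2 : (∑ q, w n q) = w n p + ∑ q ∈ Finset.univ \ {p}, w n q := by
        rw [Finset.sum_eq_add_sum_sdiff_singleton_of_mem (Finset.mem_univ p)]
      have h3 := ih (Nat.le_of_lt hn)
      omega
  -- pointwise decrease of F at each step
  have hFstep : ∀ i, i < k → ∀ q, F (i + 1) q ≤ F i q := by
    intro i hi q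
    obtain ⟨p, -, hupd⟩ := hstep i hi
    simp only [hF, hupd]
    by_cases hq : q = p
    · subst hq
      simp only [Function.update_self]
      push_cast
      rw [div_le_div_iff₀ (by positivity) (by positivity)]
      have h1 : (0:ℝ) ≤ (s q : ℝ) := Nat.cast_nonneg _
      nlinarith [Nat.cast_nonneg (α := ℝ) (w i q)]
    · rw [Function.update_of_ne hq]
  -- sup' is non-increasing
  have hM : ∀ i, i < k →
      Finset.univ.sup' hne (F (i + 1)) ≤ Finset.univ.sup' hne (F i) := by
    intro i hi
    apply Finset.sup'_le
    intro q _
    exact (hFstep i hi q).trans (Finset.le_sup' (F i) (Finset.mem_univ q))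
  -- invariant: once positive, s p / w i p dominates the current max
  have hinv : ∀ i, i ≤ k → ∀ p, 0 < w i p →
      Finset.univ.sup' hne (F i) ≤ (s p : ℝ) / (w i p : ℝ) := by
    intro i
    induction i with
    | zero => intro _ p hp; simp [h0] at hp
    | succ n ih =>
      intro hi p hp
      have hn : n < k := Nat.lt_of_succ_le hi
      obtain ⟨pc, hmaxc, hupd⟩ := hstep n hn
      have hMn : Finset.univ.sup' hne (F (n + 1)) ≤ Finset.univ.sup' hne (F n) :=
        hM n hn
      by_cases hpc : p = pc
      · subst hpc
        have hval : Finset.univ.sup' hne (F n) ≤ (s p : ℝ) / ((w n p : ℝ) + 1) :=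
          Finset.sup'_le hne _ fun q _ => hmaxc q
        have hw : (w (n + 1) p : ℝ) = (w n p : ℝ) + 1 := by
          rw [hupd]; simp [Function.update_self]
        rw [hw]
        exact hMn.trans hval
      · have hw : w (n + 1) p = w n p := by
          rw [hupd, Function.update_of_ne hpc]
        rw [hw] at hp ⊢
        exact hMn.trans (ih (Nat.le_of_lt hn) p hp)
  refine ⟨hsum k le_rfl, ?_⟩
  intro u hu
  by_contra hlt
  push_neg at hlt
  -- pointwise domination
  have hle : ∀ p, w k p ≤ u p := by
    intro p
    rcases Nat.eq_zero_or_pos (w k p) with h | h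
    · omega
    · have h1 : Finset.univ.sup' hne (F k) ≤ (s p : ℝ) / (w k p : ℝ) :=
        hinv k le_rfl p h
      have h2 : (s p : ℝ) / ((u p : ℝ) + 1) < Finset.univ.sup' hne (F k) :=
        lt_of_le_of_lt
          (Finset.le_sup' (fun p => (s p : ℝ) / ((u p : ℝ) + 1)) (Finset.mem_univ p))
          hlt
      have h3 : (s p : ℝ) / ((u p : ℝ) + 1) < (s p : ℝ) / (w k p : ℝ) :=
        h2.trans_le h1
      have hsp : (0:ℝ) < (s p : ℝ) := by exact_mod_cast hs p
      have hwp : (0:ℝ) < (w k p : ℝ) := by exact_mod_cast h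
      have hup : (0:ℝ) < (u p : ℝ) + 1 := by positivity
      have h4 : (s p : ℝ) * (w k p : ℝ) < (s p : ℝ) * ((u p : ℝ) + 1) :=
        (div_lt_div_iff₀ hup hwp).mp h3
      have h5 : (w k p : ℝ) < (u p : ℝ) + 1 := lt_of_mul_lt_mul_left h4 hsp.le
      have : (w k p : ℕ) < u p + 1 := by exact_mod_cast h5
      omega
  have heq : ∀ p ∈ Finset.univ, w k p = u p := by
    rw [← Finset.sum_eq_sum_iff_of_le (fun p _ => hle p)]
    rw [hsum k le_rfl, hu]
  have hfun : (fun p => (s p : ℝ) / ((u p : ℝ) + 1)) = F k := by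
    funext p
    rw [hF, ← heq p (Finset.mem_univ p)]
  rw [hfun] at hlt
  exact lt_irrefl _ hlt
end
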